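/- (Regular equilateral triangles.) Let k ≥ 1, let C be a color map on T_k, let c ∈ {0,1}, and let R be the set of edges of T_k with both endpoints in a sub-triangle {(r,s) : r ≥ r₀, s ≥ s₀, r + s ≤ r₀ + s₀ + t} of side t ≥ 1 contained in T_k. If all edges lying on two of the three sides of this sub-triangle have color c, then every edge in R has color c. -/

import Mathlib

noncomputable section

/-- The four possible colors of a puzzle edge: `0`, `1`, `3` and `m`. -/
inductive PColor
  | c0 | c1 | c3 | cm
deriving DecidableEq

/-- The step of an edge of type `ℓ`: type `0` goes to `x+(−1,0)`, type `1` to `x+(1,−1)`,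
type `2` to `x+(0,1)`. -/
def edgeStep : Fin 3 → ℤ × ℤ
  | 0 => (-1, 0)
  | 1 => (1, -1)
  | 2 => (0, 1)

/-- A triple of colors, read clockwise around a triangular face, is admissible if it is a
cyclic rotation of `(0,0,0)`, `(1,1,1)`, `(1,0,3)` or `(0,1,m)`. -/
def okTriple (a b c : PColor) : Prop :=
  (a = .c0 ∧ b = .c0 ∧ c = .c0) ∨ (a = .c1 ∧ b = .c1 ∧ c = .c1) ∨
  (a = .c1 ∧ b = .c0 ∧ c = .c3) ∨ (a = .c0 ∧ b = .c3 ∧ c = .c1) ∨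
  (a = .c3 ∧ b = .c1 ∧ c = .c0) ∨
  (a = .c0 ∧ b = .c1 ∧ c = .cm) ∨ (a = .c1 ∧ b = .cm ∧ c = .c0) ∨
  (a = .cm ∧ b = .c0 ∧ c = .c1)

/-- A color map on the triangular grid `T_k` : a coloring of the edges (encoded by their
type `ℓ ∈ {0,1,2}` and their origin) such that around every direct face
`{x, x+(1,0), x+(0,1)}` and every reversed face `{x, x+(1,0), x+(1,−1)}` of `T_k`, the
clockwise sequence of the three edge colors is admissible. -/
def IsColorMap (k : ℕ) (C : Fin 3 → ℤ × ℤ → PColor) : Prop :=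
  (∀ x : ℤ × ℤ, 0 ≤ x.1 → 0 ≤ x.2 → x.1 + x.2 + 1 ≤ (k : ℤ) →
    okTriple (C 2 x) (C 1 (x + (0, 1))) (C 0 (x + (1, 0)))) ∧
  (∀ x : ℤ × ℤ, 0 ≤ x.1 → 1 ≤ x.2 → x.1 + x.2 + 1 ≤ (k : ℤ) →
    okTriple (C 0 (x + (1, 0))) (C 2 (x + (1, -1))) (C 1 x))

/-- Membership in the equilateral sub-triangle with corner `(r₀, s₀)` and side `t`. -/
def inTri (r0 s0 : ℤ) (t : ℕ) (v : ℤ × ℤ) : Prop :=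
  r0 ≤ v.1 ∧ s0 ≤ v.2 ∧ v.1 + v.2 ≤ r0 + s0 + t

/-!
Peel off the column of the triangle along its third side. The rest is a triangle of side
`t - 1` whose two corresponding sides lie on the colored ones, so by induction it is entirely
colored `c`; the column is then a strip of faces whose inner side and two end rungs have
color `c`, and a look at the admissible faces shows that this forces every edge of the strip to
be `c`. The three choices of the two colored sides are exchanged by the rotation of the
triangle by `120°`, which preserves the face condition, so one case suffices.
-/

instance : Fintype PColor :=
  Fintype.ofList [.c0, .c1, .c3, .cm] (by intro x; cases x <;> simp)

instance (a b c : PColor) : Decidable (okTriple a b c) := by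
  unfold okTriple; infer_instance

theorem okTriple.rotate {a b c : PColor} (h : okTriple a b c) : okTriple b c a := by
  revert a b c; decide

namespace PColor

def mix : PColor → PColor
  | c0 => c3
  | c1 => cm
  | c => c

end PColor

section PureColor

variable {c : PColor}

theorem okTriple.fst_eq (hc : c = .c0 ∨ c = .c1) {a : PColor} (h : okTriple a c c) : a = c := by
  rcases hc with rfl | rfl <;> revert a <;> decide

theorem okTriple.snd_ne_mix (hc : c = .c0 ∨ c = .c1) {a y : PColor} (h : okTriple a y c) :
    y ≠ c.mix := by
  rcases hc with rfl | rfl <;> revert a y <;> decide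

theorem eq_mix_of_okTriple_of_okTriple (hc : c = .c0 ∨ c = .c1) {a x y y' : PColor}
    (h₁ : okTriple a y' x) (h₂ : okTriple x c y) (hy' : y' = c.mix) : y = c.mix := by
  rcases hc with rfl | rfl <;> revert a x y y' <;> decide

theorem eq_of_okTriple_of_okTriple (hc : c = .c0 ∨ c = .c1) {a x y : PColor}
    (h₁ : okTriple a c x) (h₂ : okTriple x c y) (hy : y ≠ c.mix) : y = c := by
  rcases hc with rfl | rfl <;> revert a x y <;> decide

/-- The faces of a strip with outer edges `a i`, rungs `x i`, `y i` and inner edges of color `c`.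
A rung `y i = c.mix` would force `y (i - 1) = c.mix`, and so on down to `y 0`, which the
face at the bottom end forbids; without such defects, `c` spreads down from the top rung. -/
theorem eq_of_okTriple_strip (hc : c = .c0 ∨ c = .c1) {n : ℕ} {a x y : ℕ → PColor}
    (hdir : ∀ i ≤ n, okTriple (a i) (y i) (x i)) (hrev : ∀ i < n, okTriple (x (i + 1)) c (y i))
    (hx : x 0 = c) (hy : y n = c) : ∀ i ≤ n, a i = c ∧ x i = c ∧ y i = c := by
  have hy_ne_mix : ∀ i ≤ n, y i ≠ c.mix := by
    intro i
    induction i with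
    | zero => intro _; exact (hx ▸ hdir 0 (Nat.zero_le n)).snd_ne_mix hc
    | succ i ih =>
      intro hi hmix
      exact ih (by omega) (eq_mix_of_okTriple_of_okTriple hc (hdir (i + 1) hi) (hrev i hi) hmix)
  have hy_eq : ∀ i ≤ n, y i = c := by
    intro i hi
    induction hi using Nat.decreasingInduction with
    | self => exact hy
    | of_succ i hi ih =>
      exact eq_of_okTriple_of_okTriple hc (ih ▸ hdir (i + 1) hi) (hrev i hi) (hy_ne_mix i hi.le)
  have hx_eq : ∀ i ≤ n, x i = c := by
    rintro (_ | i) hi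
    · exact hx
    · exact ((hy_eq i (by omega)) ▸ hrev i hi).fst_eq hc
  intro i hi
  refine ⟨?_, hx_eq i hi, hy_eq i hi⟩
  have hface := hdir i hi
  rw [hx_eq i hi, hy_eq i hi] at hface
  exact hface.fst_eq hc

end PureColor

def FacesAdmissible (C : Fin 3 → ℤ × ℤ → PColor) (r0 s0 : ℤ) (t : ℕ) : Prop :=
  (∀ p q : ℤ, r0 ≤ p → s0 ≤ q → p + q + 1 ≤ r0 + s0 + t →
    okTriple (C 2 (p, q)) (C 1 (p, q + 1)) (C 0 (p + 1, q))) ∧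
  (∀ p q : ℤ, r0 ≤ p → s0 + 1 ≤ q → p + q + 1 ≤ r0 + s0 + t →
    okTriple (C 0 (p + 1, q)) (C 2 (p + 1, q - 1)) (C 1 (p, q)))

section Sides

variable (C : Fin 3 → ℤ × ℤ → PColor) (r0 s0 : ℤ) (t : ℕ) (c : PColor)

def BottomColored : Prop :=
  ∀ y : ℤ × ℤ, y.2 = s0 → inTri r0 s0 t y → inTri r0 s0 t (y + edgeStep 0) → C 0 y = c

def LeftColored : Prop :=
  ∀ y : ℤ × ℤ, y.1 = r0 → inTri r0 s0 t y → inTri r0 s0 t (y + edgeStep 2) → C 2 y = c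

def HypotenuseColored : Prop :=
  ∀ y : ℤ × ℤ, y.1 + y.2 = r0 + s0 + t → inTri r0 s0 t y → inTri r0 s0 t (y + edgeStep 1) →
    C 1 y = c

def AllColored : Prop :=
  ∀ ℓ : Fin 3, ∀ y : ℤ × ℤ, inTri r0 s0 t y → inTri r0 s0 t (y + edgeStep ℓ) → C ℓ y = c

end Sides

section Triangle

variable {C : Fin 3 → ℤ × ℤ → PColor} {r0 s0 r1 s1 : ℤ} {t t' : ℕ} {c : PColor}

theorem inTri_mono {y : ℤ × ℤ} (hr : r0 ≤ r1) (hs : s0 ≤ s1) (ht : r1 + s1 + t' ≤ r0 + s0 + t)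
    (hy : inTri r1 s1 t' y) : inTri r0 s0 t y := by
  unfold inTri at *; omega

theorem IsColorMap.facesAdmissible {k : ℕ} (hC : IsColorMap k C) (hr0 : 0 ≤ r0) (hs0 : 0 ≤ s0)
    (hk : r0 + s0 + t ≤ k) : FacesAdmissible C r0 s0 t := by
  constructor
  · intro p q hp hq hpq
    simpa using hC.1 (p, q) (by omega) (by omega) (by omega)
  · intro p q hp hq hpq
    simpa [← sub_eq_add_neg] using hC.2 (p, q) (by omega) (by omega) (by omega)

theorem FacesAdmissible.mono (hF : FacesAdmissible C r0 s0 t) (hr : r0 ≤ r1) (hs : s0 ≤ s1)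
    (ht : r1 + s1 + t' ≤ r0 + s0 + t) : FacesAdmissible C r1 s1 t' :=
  ⟨fun p q hp hq hpq => hF.1 p q (by omega) (by omega) (by omega),
    fun p q hp hq hpq => hF.2 p q (by omega) (by omega) (by omega)⟩

theorem allColored_zero : AllColored C r0 s0 0 c := by
  intro ℓ y hy hy'
  fin_cases ℓ <;> simp [inTri, edgeStep] at hy hy' <;> omega

theorem inTri_succ_edge_cases {ℓ : Fin 3} {y : ℤ × ℤ} (hy : inTri r0 s0 (t + 1) y)
    (hy' : inTri r0 s0 (t + 1) (y + edgeStep ℓ)) :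
    (inTri (r0 + 1) s0 t y ∧ inTri (r0 + 1) s0 t (y + edgeStep ℓ)) ∨
      ∃ i : ℕ, i ≤ t ∧ ((ℓ = 0 ∧ y = (r0 + 1, s0 + i)) ∨ (ℓ = 1 ∧ y = (r0, s0 + i + 1)) ∨
        (ℓ = 2 ∧ y = (r0, s0 + i))) := by
  rw [or_iff_not_imp_left]
  intro hinner
  obtain ⟨p, q⟩ := y
  simp only [inTri, Nat.cast_add, Nat.cast_one] at hy hy' hinner
  obtain ⟨i, rfl⟩ := Int.le.dest hy.2.1
  fin_cases ℓ <;> simp only [edgeStep, Prod.mk_add_mk] at hy' hinner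
  · exact ⟨i, by omega, Or.inl ⟨rfl, by simp; omega⟩⟩
  · exact ⟨i - 1, by omega, Or.inr (Or.inl ⟨rfl, by simp; omega⟩)⟩
  · exact ⟨i, by omega, Or.inr (Or.inr ⟨rfl, by simp; omega⟩)⟩

theorem BottomColored.of_inner (h : BottomColored C r0 s0 (t + 1) c) :
    BottomColored C (r0 + 1) s0 t c := fun y hy h₁ h₂ =>
  h y hy (inTri_mono (by omega) le_rfl (by push_cast; omega) h₁)
    (inTri_mono (by omega) le_rfl (by push_cast; omega) h₂)

theorem HypotenuseColored.of_inner (h : HypotenuseColored C r0 s0 (t + 1) c) :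
    HypotenuseColored C (r0 + 1) s0 t c := fun y hy h₁ h₂ =>
  h y (by push_cast; omega) (inTri_mono (by omega) le_rfl (by push_cast; omega) h₁)
    (inTri_mono (by omega) le_rfl (by push_cast; omega) h₂)

theorem allColored_of_bottom_of_hypotenuse (hc : c = .c0 ∨ c = .c1)
    (hF : FacesAdmissible C r0 s0 t) (hB : BottomColored C r0 s0 t c)
    (hH : HypotenuseColored C r0 s0 t c) : AllColored C r0 s0 t c := by
  induction t generalizing r0 with
  | zero => exact allColored_zero
  | succ t ih =>
    have hinner : AllColored C (r0 + 1) s0 t c :=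
      ih (hF.mono (by omega) le_rfl (by push_cast; omega)) hB.of_inner hH.of_inner
    have hbottom : C 0 (r0 + 1, s0) = c :=
      hB (r0 + 1, s0) rfl (by simp [inTri]; omega) (by simp [inTri, edgeStep]; omega)
    have htop : C 1 (r0, s0 + t + 1) = c :=
      hH (r0, s0 + t + 1) (by push_cast; ring) (by simp [inTri]; omega)
        (by simp [inTri, edgeStep]; omega)
    have hcol := eq_of_okTriple_strip hc (n := t) (a := fun i => C 2 (r0, s0 + i))
      (x := fun i => C 0 (r0 + 1, s0 + i)) (y := fun i => C 1 (r0, s0 + i + 1))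
      (fun i hi => hF.1 r0 (s0 + i) le_rfl (by omega) (by push_cast; omega))
      (fun i hi => by
        have hface := hF.2 r0 (s0 + i + 1) le_rfl (by omega) (by push_cast; omega)
        rw [add_sub_cancel_right, hinner 2 (r0 + 1, s0 + i) (by simp [inTri]; omega)
          (by simp [inTri, edgeStep]; omega)] at hface
        rwa [Nat.cast_succ, ← add_assoc])
      (by simpa using hbottom) htop
    intro ℓ y hy hy'
    rcases inTri_succ_edge_cases hy hy' with
      ⟨h₁, h₂⟩ | ⟨i, hi, ⟨rfl, rfl⟩ | ⟨rfl, rfl⟩ | ⟨rfl, rfl⟩⟩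
    · exact hinner ℓ y h₁ h₂
    · exact (hcol i hi).2.1
    · exact (hcol i hi).2.2
    · exact (hcol i hi).1

/-- The clockwise rotation by `120°` about the centre of the sub-triangle; in coordinates
relative to the corner it is `(a, b) ↦ (b, t - a - b)`. -/
def triRotation (r0 s0 : ℤ) (t : ℕ) : ℤ × ℤ ≃ ℤ × ℤ where
  toFun y := (r0 + y.2 - s0, r0 + 2 * s0 + t - y.1 - y.2)
  invFun y := (2 * r0 + s0 + t - y.1 - y.2, s0 + y.1 - r0)
  left_inv y := by ext <;> simp; ring
  right_inv y := by ext <;> simp; ring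

/-- The color map turned counterclockwise by `120°`: it maps an edge of type `ℓ` to an edge of
type `ℓ + 1`. -/
def rotateColoring (C : Fin 3 → ℤ × ℤ → PColor) (r0 s0 : ℤ) (t : ℕ) :
    Fin 3 → ℤ × ℤ → PColor :=
  fun ℓ y => C (ℓ - 1) (triRotation r0 s0 t y)

theorem inTri_triRotation {y : ℤ × ℤ} :
    inTri r0 s0 t (triRotation r0 s0 t y) ↔ inTri r0 s0 t y := by
  simp only [inTri, triRotation, Equiv.coe_fn_mk]; omega

theorem triRotation_add_edgeStep (ℓ : Fin 3) (y : ℤ × ℤ) :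
    triRotation r0 s0 t (y + edgeStep ℓ) = triRotation r0 s0 t y + edgeStep (ℓ - 1) := by
  fin_cases ℓ <;> simp only [Fin.reduceFinMk, Fin.reduceSub] <;> ext <;>
    simp [triRotation, edgeStep] <;> ring

theorem FacesAdmissible.rotate (hF : FacesAdmissible C r0 s0 t) :
    FacesAdmissible (rotateColoring C r0 s0 t) r0 s0 t := by
  constructor
  · intro p q hp hq hpq
    have hface :=
      hF.1 (r0 + q - s0) (r0 + 2 * s0 + t - p - q - 1) (by omega) (by omega) (by omega)
    convert hface.rotate using 2 <;> simp only [rotateColoring, Fin.reduceSub] <;> congr 1 <;>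
      ext <;> simp [triRotation] <;> omega
  · intro p q hp hq hpq
    have hface :=
      hF.2 (r0 + q - s0 - 1) (r0 + 2 * s0 + t - p - q) (by omega) (by omega) (by omega)
    convert hface.rotate using 2 <;> simp only [rotateColoring, Fin.reduceSub] <;> congr 1 <;>
      ext <;> simp [triRotation] <;> omega

theorem LeftColored.rotate (h : LeftColored C r0 s0 t c) :
    BottomColored (rotateColoring C r0 s0 t) r0 s0 t c := by
  intro y hy h₁ h₂
  rw [← inTri_triRotation, triRotation_add_edgeStep] at h₂
  exact h _ (by simp [triRotation, hy]) (inTri_triRotation.2 h₁) h₂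

theorem BottomColored.rotate (h : BottomColored C r0 s0 t c) :
    HypotenuseColored (rotateColoring C r0 s0 t) r0 s0 t c := by
  intro y hy h₁ h₂
  rw [← inTri_triRotation, triRotation_add_edgeStep] at h₂
  exact h _ (by simp [triRotation]; omega) (inTri_triRotation.2 h₁) h₂

theorem HypotenuseColored.rotate (h : HypotenuseColored C r0 s0 t c) :
    LeftColored (rotateColoring C r0 s0 t) r0 s0 t c := by
  intro y hy h₁ h₂
  rw [← inTri_triRotation, triRotation_add_edgeStep] at h₂
  exact h _ (by simp [triRotation, hy]; omega) (inTri_triRotation.2 h₁) h₂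

theorem AllColored.of_rotate (h : AllColored (rotateColoring C r0 s0 t) r0 s0 t c) :
    AllColored C r0 s0 t c := by
  intro ℓ y h₁ h₂
  set z := (triRotation r0 s0 t).symm y
  have hz : triRotation r0 s0 t z = y := Equiv.apply_symm_apply _ y
  have := h (ℓ + 1) z (inTri_triRotation.1 (hz ▸ h₁))
    (inTri_triRotation.1 (by rwa [triRotation_add_edgeStep, hz, add_sub_cancel_right]))
  rwa [rotateColoring, hz, add_sub_cancel_right] at this

end Triangle

theorem statement13_general (k : ℕ) (C : Fin 3 → ℤ × ℤ → PColor) (hC : IsColorMap k C)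
    (cb : PColor) (hcb : cb = .c0 ∨ cb = .c1)
    (r0 s0 : ℤ) (t : ℕ) (hr0 : 0 ≤ r0) (hs0 : 0 ≤ s0)
    (hsub : r0 + s0 + t ≤ (k : ℤ))
    (hsides :
      ((∀ y : ℤ × ℤ, y.2 = s0 → inTri r0 s0 t y → inTri r0 s0 t (y + edgeStep 0) →
          C 0 y = cb) ∧
        (∀ y : ℤ × ℤ, y.1 = r0 → inTri r0 s0 t y → inTri r0 s0 t (y + edgeStep 2) →
          C 2 y = cb)) ∨
      ((∀ y : ℤ × ℤ, y.2 = s0 → inTri r0 s0 t y → inTri r0 s0 t (y + edgeStep 0) →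
          C 0 y = cb) ∧
        (∀ y : ℤ × ℤ, y.1 + y.2 = r0 + s0 + t → inTri r0 s0 t y →
          inTri r0 s0 t (y + edgeStep 1) → C 1 y = cb)) ∨
      ((∀ y : ℤ × ℤ, y.1 = r0 → inTri r0 s0 t y → inTri r0 s0 t (y + edgeStep 2) →
          C 2 y = cb) ∧
        (∀ y : ℤ × ℤ, y.1 + y.2 = r0 + s0 + t → inTri r0 s0 t y →
          inTri r0 s0 t (y + edgeStep 1) → C 1 y = cb))) :
    ∀ ℓ : Fin 3, ∀ y : ℤ × ℤ, inTri r0 s0 t y → inTri r0 s0 t (y + edgeStep ℓ) →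
      C ℓ y = cb := by
  have hF : FacesAdmissible C r0 s0 t := hC.facesAdmissible hr0 hs0 hsub
  rcases hsides with ⟨hB, hL⟩ | ⟨hB, hH⟩ | ⟨hL, hH⟩
  · exact AllColored.of_rotate <| allColored_of_bottom_of_hypotenuse hcb hF.rotate
      (LeftColored.rotate hL) (BottomColored.rotate hB)
  · exact allColored_of_bottom_of_hypotenuse hcb hF hB hH
  · exact AllColored.of_rotate <| AllColored.of_rotate <|
      allColored_of_bottom_of_hypotenuse hcb hF.rotate.rotate
        (LeftColored.rotate (HypotenuseColored.rotate hH))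
        (BottomColored.rotate (LeftColored.rotate hL))

/-- **Regular equilateral triangles.**
If two of the three sides of a sub-triangle of side `t ≥ 1` of `T_k` have all their edges
colored `c ∈ {0,1}`, then every edge with both endpoints in the sub-triangle is colored
`c`. -/
theorem statement13 (k : ℕ) (C : Fin 3 → ℤ × ℤ → PColor) (hC : IsColorMap k C)
    (cb : PColor) (hcb : cb = .c0 ∨ cb = .c1)
    (r0 s0 : ℤ) (t : ℕ) (ht : 1 ≤ t) (hr0 : 0 ≤ r0) (hs0 : 0 ≤ s0)
    (hsub : r0 + s0 + t ≤ (k : ℤ))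
    (hsides :
      ((∀ y : ℤ × ℤ, y.2 = s0 → inTri r0 s0 t y → inTri r0 s0 t (y + edgeStep 0) →
          C 0 y = cb) ∧
        (∀ y : ℤ × ℤ, y.1 = r0 → inTri r0 s0 t y → inTri r0 s0 t (y + edgeStep 2) →
          C 2 y = cb)) ∨
      ((∀ y : ℤ × ℤ, y.2 = s0 → inTri r0 s0 t y → inTri r0 s0 t (y + edgeStep 0) →
          C 0 y = cb) ∧
        (∀ y : ℤ × ℤ, y.1 + y.2 = r0 + s0 + t → inTri r0 s0 t y →
          inTri r0 s0 t (y + edgeStep 1) → C 1 y = cb)) ∨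
      ((∀ y : ℤ × ℤ, y.1 = r0 → inTri r0 s0 t y → inTri r0 s0 t (y + edgeStep 2) →
          C 2 y = cb) ∧
        (∀ y : ℤ × ℤ, y.1 + y.2 = r0 + s0 + t → inTri r0 s0 t y →
          inTri r0 s0 t (y + edgeStep 1) → C 1 y = cb))) :
    ∀ ℓ : Fin 3, ∀ y : ℤ × ℤ, inTri r0 s0 t y → inTri r0 s0 t (y + edgeStep ℓ) →
      C ℓ y = cb :=
  statement13_general k C hC cb hcb r0 s0 t hr0 hs0 hsub hsides
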